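/- arXiv:1205.5004 — 4 statements merged into one kernel-verified Lean document; each statement's English description precedes it below -/
import Mathlib

section
/- For Hermitian k×k matrices A and B with decreasingly ordered eigenvalues, for indices i ≤ j ≤ k one has λ_i(A+B) ≥ λ_j(A) + λ_{k+i-j}(B). -/
/-!
Weyl's inequality by dimension counting. The eigenvectors of `A` for its `j + 1` largest
eigenvalues, those of `B` for its `k - (j - i)` largest and those of `A + B` for its `k - i`
smallest span subspaces of total dimension `2k + 1` in a `k`-dimensional space, so they share a
nonzero vector `x`. On each of these subspaces the Rayleigh quotient `R_M(x) = ⟪x, M x⟫ / ‖x‖²`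
is bounded by the extreme eigenvalue involved, whence
`λ_j(A) + λ_{k+i-j}(B) ≤ R_A(x) + R_B(x) = R_{A+B}(x) ≤ λ_i(A + B)`.
-/

open Matrix Finset Module Submodule

section RayleighQuotient

variable {𝕜 E ι : Type*} [RCLike 𝕜] [NormedAddCommGroup E] [InnerProductSpace 𝕜 E] [Fintype ι]
  {T : E →ₗ[𝕜] E} {b : OrthonormalBasis ι 𝕜 E} {μ : ι → ℝ}

namespace OrthonormalBasis

lemma repr_map_of_apply_eq_smul (hT : ∀ i, T (b i) = (μ i : 𝕜) • b i) (x : E) (i : ι) :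
    b.repr (T x) i = μ i * b.repr x i := by
  classical
  conv_lhs => rw [← b.sum_repr x]
  simp [hT, smul_smul, b.repr_self, Pi.single_apply, mul_comm]

lemma re_inner_map_self_eq_sum (hT : ∀ i, T (b i) = (μ i : 𝕜) • b i) (x : E) :
    RCLike.re (inner 𝕜 x (T x)) = ∑ i, μ i * ‖b.repr x i‖ ^ 2 := by
  rw [← b.repr.inner_map_map, PiLp.inner_apply, map_sum]
  refine Finset.sum_congr rfl fun i _ => ?_
  rw [repr_map_of_apply_eq_smul hT, RCLike.inner_apply', mul_left_comm, RCLike.conj_mul]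
  norm_cast

lemma norm_sq_eq_sum_repr (x : E) : ‖x‖ ^ 2 = ∑ i, ‖b.repr x i‖ ^ 2 := by
  rw [← b.repr.norm_map x, EuclideanSpace.norm_sq_eq]

lemma repr_eq_zero_of_mem_span {s : Set ι} {x : E} (hx : x ∈ span 𝕜 (b '' s)) {i : ι}
    (hi : i ∉ s) : b.repr x i = 0 := by
  rw [b.repr_apply_apply]
  induction hx using Submodule.span_induction with
  | mem y hy =>
    obtain ⟨l, hl, rfl⟩ := hy
    exact b.orthonormal.2 fun h => hi (h ▸ hl)
  | zero => exact inner_zero_right _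
  | add y z _ _ hy hz => rw [inner_add_right, hy, hz, add_zero]
  | smul c y _ hy => rw [inner_smul_right, hy, mul_zero]

lemma mul_norm_sq_le_re_inner_map_self (hT : ∀ i, T (b i) = (μ i : 𝕜) • b i) {s : Set ι}
    {x : E} (hx : x ∈ span 𝕜 (b '' s)) {c : ℝ} (hc : ∀ i ∈ s, c ≤ μ i) :
    c * ‖x‖ ^ 2 ≤ RCLike.re (inner 𝕜 x (T x)) := by
  rw [b.norm_sq_eq_sum_repr, mul_sum, re_inner_map_self_eq_sum hT]
  refine sum_le_sum fun i _ => ?_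
  by_cases hi : i ∈ s
  · exact mul_le_mul_of_nonneg_right (hc i hi) (sq_nonneg _)
  · simp [repr_eq_zero_of_mem_span hx hi]

lemma re_inner_map_self_le_mul_norm_sq (hT : ∀ i, T (b i) = (μ i : 𝕜) • b i) {s : Set ι}
    {x : E} (hx : x ∈ span 𝕜 (b '' s)) {c : ℝ} (hc : ∀ i ∈ s, μ i ≤ c) :
    RCLike.re (inner 𝕜 x (T x)) ≤ c * ‖x‖ ^ 2 := by
  rw [b.norm_sq_eq_sum_repr, mul_sum, re_inner_map_self_eq_sum hT]
  refine sum_le_sum fun i _ => ?_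
  by_cases hi : i ∈ s
  · exact mul_le_mul_of_nonneg_right (hc i hi) (sq_nonneg _)
  · simp [repr_eq_zero_of_mem_span hx hi]

lemma finrank_span_image (b : OrthonormalBasis ι 𝕜 E) (s : Finset ι) :
    finrank 𝕜 (span 𝕜 (b '' s)) = #s := by
  rw [Set.image_eq_range]
  exact (finrank_span_eq_card
    (b.orthonormal.linearIndependent.comp ((↑) : s → ι) Subtype.val_injective)).trans (by simp)

end OrthonormalBasis

end RayleighQuotient

theorem Submodule.exists_mem_inf_inf_ne_zero {K V : Type*} [DivisionRing K] [AddCommGroup V]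
    [Module K V] [FiniteDimensional K V] (U W X : Submodule K V)
    (h : 2 * finrank K V < finrank K U + finrank K W + finrank K X) :
    ∃ x ∈ U ⊓ W ⊓ X, x ≠ 0 := by
  have hUW := finrank_sup_add_finrank_inf_eq U W
  have hUWX := finrank_sup_add_finrank_inf_eq (U ⊓ W) X
  have := (U ⊔ W).finrank_le
  have := (U ⊓ W ⊔ X).finrank_le
  refine exists_mem_ne_zero_of_ne_bot fun hbot => ?_
  rw [hbot, finrank_bot] at hUWX
  omega

theorem add_le_of_eigenbases {𝕜 E ι₁ ι₂ ι₃ : Type*} [RCLike 𝕜] [NormedAddCommGroup E]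
    [InnerProductSpace 𝕜 E] [FiniteDimensional 𝕜 E] [Fintype ι₁] [Fintype ι₂] [Fintype ι₃]
    {S T : E →ₗ[𝕜] E} {b₁ : OrthonormalBasis ι₁ 𝕜 E} {b₂ : OrthonormalBasis ι₂ 𝕜 E}
    {b₃ : OrthonormalBasis ι₃ 𝕜 E} {μ₁ : ι₁ → ℝ} {μ₂ : ι₂ → ℝ} {μ₃ : ι₃ → ℝ}
    (hS : ∀ i, S (b₁ i) = (μ₁ i : 𝕜) • b₁ i) (hT : ∀ i, T (b₂ i) = (μ₂ i : 𝕜) • b₂ i)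
    (hST : ∀ i, (S + T) (b₃ i) = (μ₃ i : 𝕜) • b₃ i)
    {s₁ : Finset ι₁} {s₂ : Finset ι₂} {s₃ : Finset ι₃}
    (hcard : 2 * finrank 𝕜 E < #s₁ + #s₂ + #s₃) {c₁ c₂ c₃ : ℝ}
    (hc₁ : ∀ i ∈ s₁, c₁ ≤ μ₁ i) (hc₂ : ∀ i ∈ s₂, c₂ ≤ μ₂ i) (hc₃ : ∀ i ∈ s₃, μ₃ i ≤ c₃) :
    c₁ + c₂ ≤ c₃ := by
  obtain ⟨x, hx, hx0⟩ := exists_mem_inf_inf_ne_zero (span 𝕜 (b₁ '' s₁)) (span 𝕜 (b₂ '' s₂))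
    (span 𝕜 (b₃ '' s₃)) (by simpa only [OrthonormalBasis.finrank_span_image] using hcard)
  obtain ⟨⟨hx₁, hx₂⟩, hx₃⟩ := hx
  have key : (c₁ + c₂) * ‖x‖ ^ 2 ≤ c₃ * ‖x‖ ^ 2 :=
    calc (c₁ + c₂) * ‖x‖ ^ 2 = c₁ * ‖x‖ ^ 2 + c₂ * ‖x‖ ^ 2 := add_mul _ _ _
      _ ≤ RCLike.re (inner 𝕜 x (S x)) + RCLike.re (inner 𝕜 x (T x)) :=
        add_le_add (b₁.mul_norm_sq_le_re_inner_map_self hS hx₁ hc₁)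
          (b₂.mul_norm_sq_le_re_inner_map_self hT hx₂ hc₂)
      _ = RCLike.re (inner 𝕜 x ((S + T) x)) := by rw [LinearMap.add_apply, inner_add_right, map_add]
      _ ≤ c₃ * ‖x‖ ^ 2 := b₃.re_inner_map_self_le_mul_norm_sq hST hx₃ hc₃
  exact le_of_mul_le_mul_right key (by positivity)

lemma Matrix.IsHermitian.toEuclideanLin_eigenvectorBasis {𝕜 n : Type*} [RCLike 𝕜] [Fintype n]
    [DecidableEq n] {A : Matrix n n 𝕜} (hA : A.IsHermitian) (i : n) :
    toEuclideanLin A (hA.eigenvectorBasis i) = (hA.eigenvalues i : 𝕜) • hA.eigenvectorBasis i := by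
  rw [toLpLin_apply, hA.mulVec_eigenvectorBasis, RCLike.real_smul_eq_coe_smul (K := 𝕜)]
  rfl

/-- Indices are 0-based: `μB ⟨k - 1 - (j - i), _⟩` is `λ_{k+i-j}(B)` in the 1-based notation. -/
theorem weyl_lower {k : ℕ} (A B : Matrix (Fin k) (Fin k) ℂ)
    (hA : A.IsHermitian) (hB : B.IsHermitian)
    (μA μB μC : Fin k → ℝ)
    (hμA : Antitone μA) (hμB : Antitone μB) (hμC : Antitone μC)
    (σA : Equiv.Perm (Fin k)) (hσA : μA = hA.eigenvalues ∘ σA)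
    (σB : Equiv.Perm (Fin k)) (hσB : μB = hB.eigenvalues ∘ σB)
    (σC : Equiv.Perm (Fin k)) (hσC : μC = (hA.add hB).eigenvalues ∘ σC)
    (i j : Fin k) (hij : i ≤ j) :
    μA j + μB ⟨k - 1 - (j.val - i.val), by have := j.isLt; omega⟩ ≤ μC i := by
  subst hσA hσB hσC
  have hAB : ∀ l, (toEuclideanLin A + toEuclideanLin B) ((hA.add hB).eigenvectorBasis l) =
      ((hA.add hB).eigenvalues l : ℂ) • (hA.add hB).eigenvectorBasis l := fun l => by
    rw [← map_add]; exact (hA.add hB).toEuclideanLin_eigenvectorBasis l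
  refine add_le_of_eigenbases hA.toEuclideanLin_eigenvectorBasis
    hB.toEuclideanLin_eigenvectorBasis hAB (s₁ := (Iic j).map σA.toEmbedding)
    (s₂ := (Iic ⟨k - 1 - (j.val - i.val), by omega⟩).map σB.toEmbedding)
    (s₃ := (Ici i).map σC.toEmbedding) ?_ ?_ ?_ ?_
  · simp only [card_map, Fin.card_Iic, Fin.card_Ici, finrank_euclideanSpace_fin]
    omega
  all_goals
    simp only [forall_mem_map, mem_Iic, mem_Ici, Equiv.coe_toEmbedding]
  · exact fun l hl => hμA hl
  · exact fun l hl => hμB hl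
  · exact fun l hl => hμC hl
end

section
/- For every integer n ≥ 2, ∏_{r=1}^{n-1} (sin²(πr/n))^{n-r} = nⁿ / 2^{n(n-1)}. -/
/-!
The `n`-th roots of unity give `∏_{k=1}^{n-1} ‖1 - ζ^k‖ = n` with `ζ = e^{2πi/n}`, and
`‖1 - ζ^k‖ = 2 sin (πk/n)`, so `∏_{r=1}^{n-1} sin (πr/n) = n / 2^{n-1}`. Since
`sin (π(n-r)/n) = sin (πr/n)`, reflecting `r ↦ n - r` turns the exponents `n - r` into `r`;
multiplying the two forms, the square of the product is `(∏ sin² (πr/n))^n = (n / 2^{n-1})^{2n}`.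
-/

open Finset Real

lemma IsPrimitiveRoot.prod_Ico_one_sub_pow_eq_order {R : Type*} [CommRing R] [IsDomain R]
    {n : ℕ} {μ : R} (hμ : IsPrimitiveRoot μ n) (hn : n ≠ 0) :
    ∏ k ∈ Ico 1 n, (1 - μ ^ k) = n := by
  obtain ⟨m, rfl⟩ := Nat.exists_eq_add_one_of_ne_zero hn
  rw [← zero_add 1, ← prod_Ico_add' (fun k ↦ 1 - μ ^ k), ← range_eq_Ico,
    hμ.prod_one_sub_pow_eq_order]
  simp

lemma norm_one_sub_exp_two_pi_I_div_pow {n k : ℕ} (hk : k ≤ n) :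
    ‖1 - Complex.exp (2 * π * Complex.I / n) ^ k‖ = 2 * sin (π * k / n) := by
  have harg : Complex.exp (2 * π * Complex.I / n) ^ k =
      Complex.exp (Complex.I * ((2 * (π * k / n) : ℝ) : ℂ)) := by
    rw [← Complex.exp_nat_mul]
    push_cast
    ring_nf
  have hsin : 0 ≤ sin (π * k / n) := by
    rcases Nat.eq_zero_or_pos n with rfl | hn
    · simp
    refine sin_nonneg_of_nonneg_of_le_pi (by positivity) ?_
    rw [div_le_iff₀ (by positivity)]
    exact mul_le_mul_of_nonneg_left (by exact_mod_cast hk) pi_pos.le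
  rw [harg, norm_sub_rev, Complex.norm_exp_I_mul_ofReal_sub_one,
    mul_div_cancel_left₀ _ two_ne_zero, Real.norm_eq_abs, abs_of_nonneg (mul_nonneg zero_le_two hsin)]

theorem prod_Ico_two_mul_sin_pi_mul_div {n : ℕ} (hn : n ≠ 0) :
    ∏ k ∈ Ico 1 n, 2 * sin (π * k / n) = n := by
  have h := congrArg norm ((Complex.isPrimitiveRoot_exp n hn).prod_Ico_one_sub_pow_eq_order hn)
  rwa [norm_prod, Complex.norm_natCast, prod_congr rfl fun k hk ↦
    norm_one_sub_exp_two_pi_I_div_pow (mem_Ico.1 hk).2.le] at h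

theorem prod_Ico_sin_pi_mul_div {n : ℕ} (hn : n ≠ 0) :
    ∏ k ∈ Ico 1 n, sin (π * k / n) = n / 2 ^ (n - 1) := by
  rw [eq_div_iff (by positivity), mul_comm, ← Nat.card_Ico 1 n, ← prod_const,
    ← prod_mul_distrib, prod_Ico_two_mul_sin_pi_mul_div hn]

lemma sin_pi_mul_sub_div {n r : ℕ} (hr : r ≤ n) :
    sin (π * (n - r : ℕ) / n) = sin (π * r / n) := by
  rcases Nat.eq_zero_or_pos n with rfl | hn
  · simp
  rw [Nat.cast_sub hr, mul_sub, sub_div, mul_div_cancel_right₀ _ (by positivity), sin_pi_sub]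

lemma Finset.prod_Ico_pow_sub_sq {M : Type*} [CommMonoid M] (f : ℕ → M) (n : ℕ)
    (hf : ∀ r ∈ Ico 1 n, f (n - r) = f r) :
    (∏ r ∈ Ico 1 n, f r ^ (n - r)) ^ 2 = (∏ r ∈ Ico 1 n, f r) ^ n := by
  have hreflect : ∏ r ∈ Ico 1 n, f r ^ (n - r) = ∏ r ∈ Ico 1 n, f r ^ r := by
    have h := prod_Ico_reflect (fun r ↦ f r ^ (n - r)) 1 n.le_succ
    rw [Nat.add_sub_cancel_left, Nat.add_sub_cancel] at h
    rw [← h]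
    refine prod_congr rfl fun r hr ↦ ?_
    rw [hf r hr, Nat.sub_sub_self (mem_Ico.1 hr).2.le]
  rw [sq]
  nth_rw 2 [hreflect]
  rw [← prod_mul_distrib, ← prod_pow]
  refine prod_congr rfl fun r hr ↦ ?_
  rw [← pow_add, Nat.sub_add_cancel (mem_Ico.1 hr).2.le]

/-- For every integer `n ≥ 2`,
`∏_{r=1}^{n-1} (sin²(πr/n))^{n-r} = nⁿ / 2^{n(n-1)}`. -/
theorem prod_sin_sq_pow (n : ℕ) (hn : 2 ≤ n) :
    ∏ r ∈ Finset.Ico 1 n, (Real.sin (π * r / n) ^ 2) ^ (n - r) =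
      (n : ℝ) ^ n / 2 ^ (n * (n - 1)) := by
  have hsq := prod_Ico_pow_sub_sq (fun r : ℕ ↦ sin (π * r / n) ^ 2) n fun r hr ↦ by
    rw [sin_pi_mul_sub_div (mem_Ico.1 hr).2.le]
  rw [prod_pow, prod_Ico_sin_pi_mul_div (by omega)] at hsq
  refine (pow_left_inj₀ (prod_nonneg fun r _ ↦ by positivity) (by positivity) two_ne_zero).1 ?_
  rw [hsq]
  ring
end

section
/- Any k×k submatrix G_k formed by selecting k rows of the generator matrix G of an (n,k) BCH-DFT code is invertible. -/
open Matrix Finset Complex Real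

/-- The unitary `l × l` DFT matrix, with entries `(1/√l)·exp(-2πi·r·s/l)`. -/
noncomputable def dftMatrix (l : ℕ) : Matrix (Fin l) (Fin l) ℂ :=
  fun r s => (1 / Real.sqrt l : ℝ) * Complex.exp (-(2 * Real.pi * Complex.I * r.val * s.val) / l)

/-- The `n × k` selection matrix with an `α × α` identity block at the top-left and a
`β × β` identity block at the bottom-right (`α + β = k`), zeros elsewhere. -/
def sigmaMat (n k α : ℕ) : Matrix (Fin n) (Fin k) ℂ :=
  fun r s => if (s.val < α ∧ r.val = s.val) ∨ (α ≤ s.val ∧ r.val = s.val + (n - k)) then 1 else 0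

/-- The generator matrix `G = √(n/k) · Wₙᴴ Σ W_k` of an `(n,k)` BCH-DFT code. -/
noncomputable def genMatrix (n k α : ℕ) : Matrix (Fin n) (Fin k) ℂ :=
  (Real.sqrt ((n : ℝ) / k) : ℂ) • ((dftMatrix n)ᴴ * sigmaMat n k α * dftMatrix k)

/-!
Put `ζ = exp(2πi/n)` and let `σ(s)` be the row of the `1` in column `s` of `Σ`. The selected
rows of `Wₙᴴ Σ` form, up to a scalar, the matrix `(z_r ^ σ(s))` with distinct `n`-th roots of
unity `z_r = ζ ^ f(r)`. Since `σ(s)` is `s` or `s + n - k` and `z_r ^ n = 1`, scaling row `r`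
by `z_r ^ (k - α)` turns the exponents into `(s + k - α) mod k`: a column permutation of the
Vandermonde matrix of the `z_r`, hence invertible. `W_k` is itself a Vandermonde matrix with
distinct nodes, so `G_k` is a product of invertible matrices.
-/

def sigmaIdx (n k α : ℕ) (hkn : k ≤ n) (s : Fin k) : Fin n :=
  if s.val < α then ⟨s, s.isLt.trans_le hkn⟩ else ⟨s + (n - k), by omega⟩

section SigmaIdx

variable {n k α : ℕ} (hkn : k ≤ n)

theorem sigmaMat_apply_eq_ite (r : Fin n) (s : Fin k) :
    sigmaMat n k α r s = if r = sigmaIdx n k α hkn s then 1 else 0 := by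
  unfold sigmaMat sigmaIdx
  split_ifs <;> simp_all [Fin.ext_iff]; omega

theorem mul_sigmaMat_apply {m : Type*} (M : Matrix m (Fin n) ℂ) (r : m) (s : Fin k) :
    (M * sigmaMat n k α) r s = M r (sigmaIdx n k α hkn s) := by
  simp [mul_apply, sigmaMat_apply_eq_ite hkn]

theorem diagonal_mul_pow_sigmaIdx {R : Type*} [CommRing R] [NeZero k] {z : Fin k → R}
    (hz : ∀ r, z r ^ n = 1) :
    diagonal (fun r => z r ^ (k - α)) * of (fun r s => z r ^ (sigmaIdx n k α hkn s : ℕ)) =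
      (vandermonde z).submatrix id (Equiv.addRight (Fin.ofNat k (k - α))) := by
  ext r s
  simp only [diagonal_mul, of_apply, submatrix_apply, id_eq, vandermonde_apply,
    Equiv.coe_addRight, Fin.val_add, Fin.val_ofNat, Nat.add_mod_mod, ← pow_add]
  unfold sigmaIdx
  split_ifs with hs
  · congr 1
    dsimp only
    rw [Nat.mod_eq_of_lt (by omega)]
    omega
  · have : k - α + (s + (n - k)) = (s + (k - α)) % k + n := by
      rw [Nat.mod_eq_sub_mod (by omega), Nat.mod_eq_of_lt (by omega)]
      omega
    rw [this, pow_add, hz, mul_one]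

theorem det_pow_sigmaIdx_ne_zero {R : Type*} [CommRing R] [IsDomain R] {z : Fin k → R}
    (hz : Function.Injective z) (hzn : ∀ r, z r ^ n = 1) :
    (of fun r s => z r ^ (sigmaIdx n k α hkn s : ℕ)).det ≠ 0 := by
  rcases k.eq_zero_or_pos with rfl | hk
  · simp
  have : NeZero k := ⟨hk.ne'⟩
  have h := congrArg det (diagonal_mul_pow_sigmaIdx (α := α) hkn hzn)
  rw [det_mul, det_permute'] at h
  refine right_ne_zero_of_mul (h ▸ mul_ne_zero ?_ (det_vandermonde_ne_zero_iff.mpr hz))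
  exact ((Equiv.Perm.sign _).isUnit.map (Int.castRingHom R)).ne_zero

end SigmaIdx

theorem dftMatrix_eq_smul_vandermonde (l : ℕ) :
    dftMatrix l = ((1 / √l : ℝ) : ℂ) •
      vandermonde (fun r : Fin l => (exp (2 * π * I / l))⁻¹ ^ (r : ℕ)) := by
  ext r s
  rw [Matrix.smul_apply, vandermonde_apply, dftMatrix, smul_eq_mul, ← Complex.exp_neg, ← pow_mul,
    ← Complex.exp_nat_mul]
  congr 2
  push_cast
  ring

theorem det_dftMatrix_ne_zero {l : ℕ} (hl : 0 < l) : (dftMatrix l).det ≠ 0 := by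
  have hζ := (isPrimitiveRoot_exp l hl.ne').inv
  rw [dftMatrix_eq_smul_vandermonde, det_smul, Fintype.card_fin]
  refine mul_ne_zero (pow_ne_zero _ ?_) (det_vandermonde_ne_zero_iff.mpr ?_)
  · exact_mod_cast one_div_ne_zero (Real.sqrt_pos.mpr (by exact_mod_cast hl)).ne'
  · exact fun r s h => Fin.val_injective (hζ.pow_inj r.isLt s.isLt h)

theorem conjTranspose_dftMatrix_apply (l : ℕ) (r s : Fin l) :
    (dftMatrix l)ᴴ r s = ((1 / √l : ℝ) : ℂ) * (exp (2 * π * I / l) ^ (r : ℕ)) ^ (s : ℕ) := by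
  rw [conjTranspose_apply, dftMatrix, star_def, map_mul, conj_ofReal, ← exp_conj]
  simp only [map_div₀, map_neg, map_mul, conj_I, conj_ofReal, map_natCast, map_ofNat]
  rw [← pow_mul, ← Complex.exp_nat_mul]
  congr 2
  push_cast
  ring

theorem conjTranspose_dftMatrix_mul_sigmaMat {n k α : ℕ} (hkn : k ≤ n) :
    (dftMatrix n)ᴴ * sigmaMat n k α = ((1 / √n : ℝ) : ℂ) • of fun (r : Fin n) (s : Fin k) =>
      (exp (2 * π * I / n) ^ (r : ℕ)) ^ (sigmaIdx n k α hkn s : ℕ) := by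
  ext r s
  rw [mul_sigmaMat_apply hkn, conjTranspose_dftMatrix_apply, Matrix.smul_apply, of_apply,
    smul_eq_mul]

theorem genMatrix_submatrix_eq {ι : Type*} {n k α : ℕ} (hkn : k ≤ n) (f : ι → Fin n) :
    (genMatrix n k α).submatrix f id = ((√(n / k) : ℝ) * (1 / √n : ℝ) : ℂ) •
      ((of fun r s => (exp (2 * π * I / n) ^ (f r : ℕ)) ^ (sigmaIdx n k α hkn s : ℕ)) *
        dftMatrix k) := by
  rw [genMatrix, submatrix_smul, Pi.smul_apply, Pi.smul_apply,
    submatrix_mul _ _ _ id _ Function.bijective_id, conjTranspose_dftMatrix_mul_sigmaMat hkn,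
    submatrix_smul, Pi.smul_apply, Pi.smul_apply, smul_mul, smul_smul]
  rfl

theorem genMatrix_submatrix_invertible_general {n k α : ℕ} (hk : 0 < k) (hkn : k < n)
    (f : Fin k → Fin n) (hf : Function.Injective f) :
    IsUnit ((genMatrix n k α).submatrix f id) := by
  have hζ := isPrimitiveRoot_exp n (by omega)
  rw [genMatrix_submatrix_eq hkn.le, isUnit_iff_isUnit_det, det_smul, det_mul,
    isUnit_iff_ne_zero]
  refine mul_ne_zero (pow_ne_zero _ ?_) (mul_ne_zero (det_pow_sigmaIdx_ne_zero _ ?_ ?_)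
    (det_dftMatrix_ne_zero hk))
  · have : (0 : ℝ) < √(n / k) * (1 / √n) := by
      have : (0 : ℝ) < n := by exact_mod_cast hk.trans hkn
      have : (0 : ℝ) < k := by exact_mod_cast hk
      positivity
    exact_mod_cast this.ne'
  · exact fun r s h => hf (Fin.val_injective (hζ.pow_inj (f r).isLt (f s).isLt h))
  · intro r
    rw [← pow_mul, pow_mul', hζ.pow_eq_one, one_pow]

/-- Any `k × k` submatrix formed by selecting `k` distinct rows of the generator matrix
of an `(n,k)` BCH-DFT code is invertible. -/
theorem genMatrix_submatrix_invertible {n k α β : ℕ} (hk : 0 < k) (hkn : k < n)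
    (hab : α + β = k) (f : Fin k → Fin n) (hf : Function.Injective f) :
    IsUnit ((genMatrix n k α).submatrix f id) :=
  genMatrix_submatrix_invertible_general hk hkn f hf
end

section
/- Let G be the generator matrix of an (n,k) BCH-DFT code with k not dividing n. Then for any k×k submatrix G_k of G, the largest eigenvalue of G_k^H G_k is strictly greater than 1. -/
/-! `G Gᴴ = (n/k) Wₙᴴ (Σ Σᴴ) Wₙ`, and `Σ Σᴴ` is the diagonal projection onto `k` cyclically
consecutive coordinates, so the entries of `G Gᴴ` are geometric sums in `ζ = ω^(r - r')`, `ω` a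
primitive `n`-th root of unity: the diagonal entries are `1`, and an off-diagonal entry vanishes
only if `ζ^k = 1`, i.e. `n ∣ k (r - r')`. Hence `tr (G_kᴴ G_k) = k`; if no eigenvalue exceeded `1`,
all of them would equal `1`, so `G_k G_kᴴ = 1` and the `k` selected rows would be pairwise
congruent modulo `n / gcd(n, k)`. Only `gcd(n, k)` indices below `n` lie in one such class, so
`k ≤ gcd(n, k)`, i.e. `k ∣ n`. -/

open Matrix Finset Complex Real

theorem Matrix.IsHermitian.eq_one_of_eigenvalues_le_one {𝕜 ι : Type*} [RCLike 𝕜] [Fintype ι]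
    [DecidableEq ι] {A : Matrix ι ι 𝕜} (hA : A.IsHermitian) (hle : ∀ i, hA.eigenvalues i ≤ 1)
    (htr : A.trace = Fintype.card ι) : A = 1 := by
  have hsum : ∑ i, hA.eigenvalues i = ∑ _i : ι, (1 : ℝ) := by
    rw [hA.trace_eq_sum_eigenvalues] at htr
    simpa using (by exact_mod_cast htr : ∑ i, hA.eigenvalues i = Fintype.card ι)
  have hone : hA.eigenvalues = 1 := funext fun i =>
    (Finset.sum_eq_sum_iff_of_le fun j _ => hle j).mp hsum i (mem_univ i)
  rw [hA.spectral_theorem, hone]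
  simp

theorem Nat.card_le_div_of_forall_modEq {ι : Type*} [Fintype ι] {n m : ℕ} (hm : m ∣ n)
    (f : ι → Fin n) (hf : Function.Injective f) (hmod : ∀ i j, (f i : ℕ) ≡ f j [MOD m]) :
    Fintype.card ι ≤ n / m := by
  rcases eq_or_ne m 0 with rfl | -
  · simpa [Nat.eq_zero_of_zero_dvd hm] using Fintype.card_le_of_injective f hf
  have hlt : ∀ i, (f i : ℕ) / m < n / m := fun i => Nat.div_lt_div_of_lt_of_dvd hm (f i).isLt
  have hinj : Function.Injective fun i => (⟨(f i : ℕ) / m, hlt i⟩ : Fin (n / m)) := by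
    intro i j hij
    apply hf
    ext
    simp only [Fin.mk.injEq] at hij
    rw [← Nat.div_add_mod (f i : ℕ) m, ← Nat.div_add_mod (f j : ℕ) m, hmod i j, hij]
  simpa using Fintype.card_le_of_injective _ hinj

theorem Nat.dvd_of_injective_of_forall_mul_modEq {n k : ℕ} (hk : 0 < k)
    (f : Fin k → Fin n) (hf : Function.Injective f) (hmod : ∀ i j, k * f i ≡ k * f j [MOD n]) :
    k ∣ n := by
  have hn : 0 < n := (f ⟨0, hk⟩).pos
  have hcard := Nat.card_le_div_of_forall_modEq (Nat.div_dvd_of_dvd (Nat.gcd_dvd_left n k)) f hf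
    fun i j => (hmod i j).cancel_left_div_gcd hn
  rw [Fintype.card_fin, Nat.div_div_self (Nat.gcd_dvd_left n k) hn.ne'] at hcard
  rw [← le_antisymm (Nat.gcd_le_right n hk) hcard]
  exact Nat.gcd_dvd_left n k

theorem IsPrimitiveRoot.div_pow_pow_eq_one_iff {K : Type*} [Field K] {ω : K} {l : ℕ}
    (h : IsPrimitiveRoot ω l) (hl : l ≠ 0) (a b m : ℕ) :
    (ω ^ a / ω ^ b) ^ m = 1 ↔ m * a ≡ m * b [MOD l] := by
  rw [div_pow, ← pow_mul, ← pow_mul, div_eq_one_iff_eq (pow_ne_zero _ (h.ne_zero hl)),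
    (h.isOfFinOrder hl).pow_eq_pow_iff_modEq, ← h.eq_orderOf, mul_comm a, mul_comm b]

theorem IsPrimitiveRoot.div_pow_pow_pow_self_eq_one {K : Type*} [Field K] {ω : K} {l : ℕ}
    (h : IsPrimitiveRoot ω l) (a b : ℕ) : (ω ^ a / ω ^ b) ^ l = 1 := by
  rw [div_pow, pow_right_comm, pow_right_comm ω b, h.pow_eq_one, one_pow, one_pow, div_one]

theorem mul_geom_sum_add_geom_sum_Ico_mul_pow {R : Type*} [CommRing R] {ζ : R} {n : ℕ}
    (hζ : ζ ^ n = 1) (α : ℕ) {β : ℕ} (hβ : β ≤ n) :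
    (ζ - 1) * (∑ t ∈ range α, ζ ^ t + ∑ t ∈ Ico (n - β) n, ζ ^ t) * ζ ^ β = ζ ^ (α + β) - 1 := by
  have hrot : ζ ^ (n - β) * ζ ^ β = 1 := by rw [← pow_add, Nat.sub_add_cancel hβ, hζ]
  rw [mul_comm (ζ - 1), add_mul, geom_sum_mul, geom_sum_Ico_mul _ (Nat.sub_le n β), hζ, pow_add]
  linear_combination -hrot

theorem Fin.sum_ite_lt_or_le_mul {R : Type*} [CommRing R] (g : ℕ → R) {a b n : ℕ} (hab : a ≤ b)
    (hbn : b ≤ n) :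
    ∑ t : Fin n, (if (t : ℕ) < a ∨ b ≤ t then 1 else 0) * g t =
      ∑ t ∈ range a, g t + ∑ t ∈ Ico b n, g t := by
  rw [Fin.sum_univ_eq_sum_range (fun t => (if t < a ∨ b ≤ t then 1 else 0) * g t)]
  simp only [ite_mul, one_mul, zero_mul]
  rw [← sum_filter, ← sum_union]
  · congr 1
    ext t
    simp only [mem_filter, mem_range, mem_union, mem_Ico]
    omega
  · exact disjoint_left.mpr fun t ht ht' => by
      simp only [mem_range, mem_Ico] at ht ht'
      omega

noncomputable def dftRoot (l : ℕ) : ℂ :=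
  cexp (2 * π * I / l)

theorem isPrimitiveRoot_dftRoot {l : ℕ} (hl : l ≠ 0) : IsPrimitiveRoot (dftRoot l) l :=
  Complex.isPrimitiveRoot_exp l hl

theorem dftMatrix_apply (l : ℕ) (t r : Fin l) :
    dftMatrix l t r = (Real.sqrt l : ℂ)⁻¹ * ((dftRoot l ^ (r : ℕ)) ^ (t : ℕ))⁻¹ := by
  rw [dftMatrix, dftRoot, ← pow_mul, ← Complex.exp_nat_mul, ← Complex.exp_neg]
  push_cast
  congr 2 <;> ring

theorem star_dftMatrix_apply (l : ℕ) (t r : Fin l) :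
    star (dftMatrix l t r) = (Real.sqrt l : ℂ)⁻¹ * (dftRoot l ^ (r : ℕ)) ^ (t : ℕ) := by
  rw [dftMatrix, dftRoot, ← pow_mul, ← Complex.exp_nat_mul, RCLike.star_def, map_mul,
    ← Complex.exp_conj]
  simp only [map_div₀, map_neg, map_mul, Complex.conj_ofReal, Complex.conj_I, map_natCast,
    map_ofNat]
  push_cast
  congr 2 <;> ring

theorem conjTranspose_dftMatrix_mul_diagonal_mul_apply (l : ℕ) (d : Fin l → ℂ) (r r' : Fin l) :
    ((dftMatrix l)ᴴ * diagonal d * dftMatrix l) r r' =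
      (l : ℂ)⁻¹ * ∑ t : Fin l, d t * (dftRoot l ^ (r : ℕ) / dftRoot l ^ (r' : ℕ)) ^ (t : ℕ) := by
  have hsqrt : ((Real.sqrt l : ℂ)⁻¹) * (Real.sqrt l : ℂ)⁻¹ = (l : ℂ)⁻¹ := by
    rw [← mul_inv, ← Complex.ofReal_mul, Real.mul_self_sqrt (Nat.cast_nonneg l)]
    push_cast
    rfl
  rw [mul_apply, Finset.mul_sum]
  refine Finset.sum_congr rfl fun t _ => ?_
  rw [mul_diagonal, conjTranspose_apply, star_dftMatrix_apply, dftMatrix_apply, ← hsqrt]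
  ring

theorem conjTranspose_dftMatrix_mul_self (l : ℕ) : (dftMatrix l)ᴴ * dftMatrix l = 1 := by
  rcases eq_or_ne l 0 with rfl | hl
  · exact Subsingleton.elim _ _
  ext r r'
  have hω := isPrimitiveRoot_dftRoot hl
  have hentry := conjTranspose_dftMatrix_mul_diagonal_mul_apply l (fun _ => 1) r r'
  rw [diagonal_one, Matrix.mul_one] at hentry
  simp only [one_mul] at hentry
  rw [hentry, Fin.sum_univ_eq_sum_range (fun t => (_ / _) ^ t)]
  by_cases hrr : r = r'
  · rw [hrr, div_self (pow_ne_zero _ (hω.ne_zero hl))]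
    simp [hl]
  · have hζ1 : dftRoot l ^ (r : ℕ) / dftRoot l ^ (r' : ℕ) ≠ 1 := by
      rw [← pow_one (_ / _), Ne, hω.div_pow_pow_eq_one_iff hl, one_mul, one_mul]
      exact fun h => hrr (Fin.ext (h.eq_of_lt_of_lt r.isLt r'.isLt))
    rw [geom_sum_eq hζ1, hω.div_pow_pow_pow_self_eq_one, sub_self, zero_div, mul_zero,
      one_apply_ne hrr]

theorem dftMatrix_mul_conjTranspose_self (l : ℕ) : dftMatrix l * (dftMatrix l)ᴴ = 1 :=
  mul_eq_one_comm.mp (conjTranspose_dftMatrix_mul_self l)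

theorem sigmaMat_mul_conjTranspose {n k α β : ℕ} (hab : α + β = k) (hkn : k ≤ n) :
    sigmaMat n k α * (sigmaMat n k α)ᴴ =
      diagonal fun t : Fin n => if (t : ℕ) < α ∨ n - β ≤ t then 1 else 0 := by
  ext t t'
  simp only [mul_apply, conjTranspose_apply, sigmaMat, diagonal_apply, apply_ite star, star_one,
    star_zero, ite_zero_mul_ite_zero, mul_one, Finset.sum_boole]
  by_cases htt : t = t'
  · subst htt
    simp only [and_self, if_true]
    split_ifs with hS
    · -- the column of the unique nonzero entry in row `t`
      have hlt : (if (t : ℕ) < α then (t : ℕ) else t - (n - k)) < k := by split_ifs <;> omega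
      rw [Nat.cast_eq_one, Finset.card_eq_one]
      refine ⟨⟨_, hlt⟩, ?_⟩
      ext s
      simp only [mem_filter, mem_univ, true_and, mem_singleton, Fin.ext_iff]
      split_ifs <;> omega
    · simp only [Nat.cast_eq_zero, Finset.card_eq_zero, Finset.filter_eq_empty_iff]
      intro s _
      omega
  · simp only [htt, if_false, Nat.cast_eq_zero, Finset.card_eq_zero, Finset.filter_eq_empty_iff]
    intro s _ hs
    exact htt (Fin.ext (by omega))

theorem genMatrix_mul_conjTranspose (n k α : ℕ) :
    genMatrix n k α * (genMatrix n k α)ᴴ =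
      ((n : ℂ) / k) • ((dftMatrix n)ᴴ * (sigmaMat n k α * (sigmaMat n k α)ᴴ) * dftMatrix n) := by
  have hscalar : (Real.sqrt ((n : ℝ) / k) : ℂ) * star (Real.sqrt ((n : ℝ) / k) : ℂ) = n / k := by
    rw [RCLike.star_def, Complex.conj_ofReal, ← Complex.ofReal_mul,
      Real.mul_self_sqrt (by positivity)]
    push_cast
    rfl
  rw [genMatrix, conjTranspose_smul, Matrix.smul_mul, Matrix.mul_smul, smul_smul, hscalar,
    conjTranspose_mul, conjTranspose_mul, conjTranspose_conjTranspose]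
  simp only [Matrix.mul_assoc]
  rw [← Matrix.mul_assoc (dftMatrix k), dftMatrix_mul_conjTranspose_self, Matrix.one_mul]

theorem genMatrix_mul_conjTranspose_apply {n k α β : ℕ} (hab : α + β = k) (hkn : k ≤ n)
    (r r' : Fin n) :
    (genMatrix n k α * (genMatrix n k α)ᴴ) r r' = (k : ℂ)⁻¹ *
      (∑ t ∈ range α, (dftRoot n ^ (r : ℕ) / dftRoot n ^ (r' : ℕ)) ^ t +
        ∑ t ∈ Ico (n - β) n, (dftRoot n ^ (r : ℕ) / dftRoot n ^ (r' : ℕ)) ^ t) := by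
  have hn : (n : ℂ) ≠ 0 := Nat.cast_ne_zero.mpr r.pos.ne'
  rw [genMatrix_mul_conjTranspose, sigmaMat_mul_conjTranspose hab hkn, Matrix.smul_apply,
    conjTranspose_dftMatrix_mul_diagonal_mul_apply,
    Fin.sum_ite_lt_or_le_mul (fun t => (_ / _) ^ t) (by omega) (Nat.sub_le n β), smul_eq_mul]
  field_simp

theorem genMatrix_mul_conjTranspose_apply_self {n k α β : ℕ} (hk : k ≠ 0) (hab : α + β = k)
    (hkn : k ≤ n) (r : Fin n) :
    (genMatrix n k α * (genMatrix n k α)ᴴ) r r = 1 := by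
  rw [genMatrix_mul_conjTranspose_apply hab hkn, div_self (pow_ne_zero _
    ((isPrimitiveRoot_dftRoot r.pos.ne').ne_zero r.pos.ne'))]
  simp only [one_pow, sum_const, card_range, Nat.card_Ico, nsmul_one]
  rw [Nat.sub_sub_self (by omega), ← Nat.cast_add, hab]
  exact inv_mul_cancel₀ (Nat.cast_ne_zero.mpr hk)

theorem modEq_of_genMatrix_mul_conjTranspose_apply_eq_zero {n k α β : ℕ} (hab : α + β = k)
    (hkn : k ≤ n) {r r' : Fin n} (h : (genMatrix n k α * (genMatrix n k α)ᴴ) r r' = 0) :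
    k * r ≡ k * r' [MOD n] := by
  have hω := isPrimitiveRoot_dftRoot r.pos.ne'
  rw [genMatrix_mul_conjTranspose_apply hab hkn, mul_eq_zero, inv_eq_zero, Nat.cast_eq_zero] at h
  rcases h with rfl | hsum
  · simp only [zero_mul, Nat.ModEq.refl]
  rw [← hω.div_pow_pow_eq_one_iff r.pos.ne', ← sub_eq_zero, ← hab,
    ← mul_geom_sum_add_geom_sum_Ico_mul_pow (hω.div_pow_pow_pow_self_eq_one _ _) α (by omega),
    hsum, mul_zero, zero_mul]

/-- For an `(n,k)` BCH-DFT code with `k ∤ n`, the largest eigenvalue of `G_kᴴ G_k` of any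
`k × k` row-submatrix `G_k` of `G` is strictly greater than `1`. -/
theorem submatrix_gram_max_eigenvalue_gt_one {n k α β : ℕ} (hk : 0 < k) (hkn : k < n)
    (hab : α + β = k) (hndvd : ¬ k ∣ n)
    (f : Fin k → Fin n) (hf : Function.Injective f) :
    1 < Finset.univ.sup' (Finset.univ_nonempty_iff.mpr ⟨⟨0, hk⟩⟩)
        (Matrix.isHermitian_conjTranspose_mul_self
          ((genMatrix n k α).submatrix f id)).eigenvalues := by
  set Gk := (genMatrix n k α).submatrix f id
  have hGram : Gk * Gkᴴ = (genMatrix n k α * (genMatrix n k α)ᴴ).submatrix f f := by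
    rw [conjTranspose_submatrix, submatrix_mul _ _ _ id _ Function.bijective_id]
  have htrace : (Gkᴴ * Gk).trace = Fintype.card (Fin k) := by
    rw [trace_mul_comm, hGram]
    simp [trace, genMatrix_mul_conjTranspose_apply_self hk.ne' hab hkn.le]
  by_contra! hle
  have hone : Gkᴴ * Gk = 1 := (isHermitian_conjTranspose_mul_self Gk).eq_one_of_eigenvalues_le_one
    (fun i => (Finset.sup'_le_iff _ _).mp hle i (mem_univ i)) htrace
  refine hndvd (Nat.dvd_of_injective_of_forall_mul_modEq hk f hf fun i j => ?_)
  rcases eq_or_ne i j with rfl | hij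
  · rfl
  apply modEq_of_genMatrix_mul_conjTranspose_apply_eq_zero hab hkn.le
  rw [← submatrix_apply (genMatrix n k α * (genMatrix n k α)ᴴ) f f, ← hGram,
    mul_eq_one_comm.mp hone, one_apply_ne hij]
end
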